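/- Uniform force reachability: for every per-arm thrust limit T > 0, the set of net forces achievable with zero net torque, {f ∈ ℝ^3 : ∃ t_1, t_2, t_3, t_4 ∈ ℝ^3 with ‖t_i‖ ≤ T for all i, ∑_{i=1}^4 t_i = f and ∑_{i=1}^4 l_i × t_i = 0}, is exactly the closed Euclidean ball in ℝ^3 of radius 4T centered at the origin; in particular the maximum achievable force magnitude is the same (equal to 4T) in every direction. -/

import Mathlib

/-- Cross product on `EuclideanSpace ℝ (Fin 3)`. -/
noncomputable def cross3 (a b : EuclideanSpace ℝ (Fin 3)) : EuclideanSpace ℝ (Fin 3) :=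
  WithLp.toLp 2 ![a 1 * b 2 - a 2 * b 1, a 2 * b 0 - a 0 * b 2, a 0 * b 1 - a 1 * b 0]

/-- The rotor-arm position vectors `l₁, l₂, l₃, l₄`. -/
noncomputable def armVec (lx ly : ℝ) : Fin 4 → EuclideanSpace ℝ (Fin 3) :=
  ![WithLp.toLp 2 ![lx, ly, 0], WithLp.toLp 2 ![lx, -ly, 0], WithLp.toLp 2 ![-lx, -ly, 0],
    WithLp.toLp 2 ![-lx, ly, 0]]

/-- **Uniform force reachability**: for every per-arm thrust limit `T > 0`, the set of
net forces achievable with zero net torque is exactly the closed Euclidean ball of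
radius `4T` centered at the origin. -/
theorem uniform_force_reachability (lx ly : ℝ) (hlx : 0 < lx) (hly : 0 < ly)
    (T : ℝ) (hT : 0 < T) :
    {f : EuclideanSpace ℝ (Fin 3) |
      ∃ t : Fin 4 → EuclideanSpace ℝ (Fin 3),
        (∀ i, ‖t i‖ ≤ T) ∧ (∑ i, t i) = f ∧
        (∑ i, cross3 (armVec lx ly i) (t i)) = 0}
      = Metric.closedBall (0 : EuclideanSpace ℝ (Fin 3)) (4 * T) := by
  ext f
  simp only [Set.mem_setOf_eq, Metric.mem_closedBall, dist_zero_right]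
  constructor
  · rintro ⟨t, hb, rfl, -⟩
    calc ‖∑ i, t i‖ ≤ ∑ i, ‖t i‖ := norm_sum_le _ _
      _ ≤ ∑ _i : Fin 4, T := Finset.sum_le_sum fun i _ => hb i
      _ = 4 * T := by simp
  · intro hf
    refine ⟨fun _ => (4 : ℝ)⁻¹ • f, fun i => ?_, ?_, ?_⟩
    · rw [norm_smul]
      simp only [norm_inv, Real.norm_ofNat]
      rw [inv_mul_le_iff₀ (by norm_num)]
      linarith
    · rw [Fin.sum_univ_four]
      module
    · rw [Fin.sum_univ_four]
      ext j
      simp only [armVec, cross3, Matrix.cons_val_zero, Matrix.cons_val_one, Matrix.head_cons,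
        Matrix.cons_val_two, Matrix.tail_cons]
      have hs : ∀ k : Fin 3, ((4 : ℝ)⁻¹ • f) k = (4 : ℝ)⁻¹ * f k := fun k => rfl
      fin_cases j <;>
        simp [PiLp.add_apply, hs] <;> ring
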